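/- In algorithm AlgAU, if an edge (u, v) is not protected at time t and λ_u^t < λ_v^t, then λ_u^t ≤ λ_u^{t+1} < λ_v^{t+1} ≤ λ_v^t: the levels of the two endpoints can only move towards each other and cannot cross. -/
import Mathlib


set_option autoImplicit false

/-- A turn of AlgAU: able turns `Able(ℓ)` for `1 ≤ |ℓ| ≤ k` and faulty turns
`Faulty(ℓ)` for `2 ≤ |ℓ| ≤ k`. -/
inductive Turn where
  | able (ℓ : ℤ)
  | faulty (ℓ : ℤ)
deriving DecidableEq

/-- The level of a turn. -/
def Turn.level : Turn → ℤ
  | .able ℓ => ℓ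
  | .faulty ℓ => ℓ

/-- Whether a turn is able. -/
def Turn.isAble : Turn → Prop
  | .able _ => True
  | .faulty _ => False

/-- A turn belongs to the state set of AlgAU with parameter `k`. -/
def ValidTurn (k : ℤ) : Turn → Prop
  | .able ℓ => 1 ≤ |ℓ| ∧ |ℓ| ≤ k
  | .faulty ℓ => 2 ≤ |ℓ| ∧ |ℓ| ≤ k

/-- The forward operator: `φ(-1) = 1`, `φ(k) = -k`, `φ(ℓ) = ℓ + 1` otherwise. -/
def forwardOp (k : ℤ) (ℓ : ℤ) : ℤ :=
  if ℓ = -1 then 1 else if ℓ = k then -k else ℓ + 1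

/-- Levels `ℓ, ℓ'` are adjacent: `ℓ' ∈ {ℓ, φ(ℓ), φ⁻¹(ℓ)}`. -/
def adjLvl (k : ℤ) (ℓ ℓ' : ℤ) : Prop :=
  ℓ' = ℓ ∨ ℓ' = forwardOp k ℓ ∨ ℓ = forwardOp k ℓ'

/-- `ψ⁻¹(ℓ)`: the level one unit inwards of `ℓ` (same sign, absolute value decreased). -/
def inwd (ℓ : ℤ) : ℤ := if 0 < ℓ then ℓ - 1 else ℓ + 1

/-- `m` is strictly outwards of `ℓ`: same sign and strictly larger absolute value. -/
def strictOut (ℓ m : ℤ) : Prop := (0 < ℓ ∧ ℓ < m) ∨ (ℓ < 0 ∧ m < ℓ)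

/-- The inclusive neighborhood `N⁺(v)`. -/
def closedNbhd {V : Type} (G : SimpleGraph V) (v : V) : Set V := {u | u = v ∨ G.Adj u v}

/-- Node `v` is protected under configuration `c`: all incident edges have adjacent
endpoint levels. -/
def NodeProt {V : Type} (k : ℤ) (G : SimpleGraph V) (c : V → Turn) (v : V) : Prop :=
  ∀ u, G.Adj u v → adjLvl k ((c v).level) ((c u).level)

/-- Node `v` is good: protected and sensing no faulty turn. -/
def NodeGood {V : Type} (k : ℤ) (G : SimpleGraph V) (c : V → Turn) (v : V) : Prop :=
  NodeProt k G c v ∧ ∀ u ∈ closedNbhd G v, (c u).isAble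

/-- Condition for a type AA transition of `v` from `Able(ℓ)` to `Able(φ(ℓ))`:
`v` is good and all sensed levels belong to `{ℓ, φ(ℓ)}`. -/
def AAcond {V : Type} (k : ℤ) (G : SimpleGraph V) (c : V → Turn) (v : V) (ℓ : ℤ) : Prop :=
  c v = .able ℓ ∧ NodeGood k G c v ∧
    ∀ u ∈ closedNbhd G v, (c u).level = ℓ ∨ (c u).level = forwardOp k ℓ

/-- Condition for a type AF transition of `v` from `Able(ℓ)` to `Faulty(ℓ)`
(`2 ≤ |ℓ|`): `v` is not protected or senses the turn `Faulty(ψ⁻¹(ℓ))`. -/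
def AFcond {V : Type} (k : ℤ) (G : SimpleGraph V) (c : V → Turn) (v : V) (ℓ : ℤ) : Prop :=
  c v = .able ℓ ∧ 2 ≤ |ℓ| ∧
    (¬ NodeProt k G c v ∨ ∃ u ∈ closedNbhd G v, c u = .faulty (inwd ℓ))

/-- Condition for a type FA transition of `v` from `Faulty(ℓ)` to `Able(ψ⁻¹(ℓ))`:
`v` senses no level strictly outwards of `ℓ`. -/
def FAcond {V : Type} (G : SimpleGraph V) (c : V → Turn) (v : V) (ℓ : ℤ) : Prop :=
  c v = .faulty ℓ ∧ ∀ u ∈ closedNbhd G v, ¬ strictOut ℓ ((c u).level)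

/-- The new turn `q` of an activated node `v` in one step of AlgAU. -/
def StepNode {V : Type} (k : ℤ) (G : SimpleGraph V) (c : V → Turn) (v : V) (q : Turn) : Prop :=
  (∀ ℓ, AAcond k G c v ℓ → q = .able (forwardOp k ℓ)) ∧
  (∀ ℓ, AFcond k G c v ℓ → ¬ AAcond k G c v ℓ → q = .faulty ℓ) ∧
  (∀ ℓ, FAcond G c v ℓ → q = .able (inwd ℓ)) ∧
  ((∀ ℓ, ¬ AAcond k G c v ℓ ∧ ¬ AFcond k G c v ℓ ∧ ¬ FAcond G c v ℓ) → q = c v)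

/-- One asynchronous step of AlgAU with activation set `A`: activated nodes follow
the transition rules, the others keep their turns. -/
def Step {V : Type} (k : ℤ) (G : SimpleGraph V) (A : Set V) (c c' : V → Turn) : Prop :=
  ∀ v, (v ∉ A → c' v = c v) ∧ (v ∈ A → StepNode k G c v (c' v))

lemma valid_bounds (k : ℤ) (q : Turn) (h : ValidTurn k q) :
    1 ≤ |q.level| ∧ |q.level| ≤ k := by
  cases q with
  | able ℓ => exact h
  | faulty ℓ => exact ⟨le_trans (by norm_num) h.1, h.2⟩

lemma step_node_cases {V : Type} (k : ℤ) (G : SimpleGraph V) (c : V → Turn) (w : V) (q : Turn)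
    (hs : StepNode k G c w q) (hnp : ¬ NodeProt k G c w) :
    q.level = (c w).level ∨
    (∃ ℓ, c w = .faulty ℓ ∧ q = .able (inwd ℓ) ∧
      ∀ x ∈ closedNbhd G w, ¬ strictOut ℓ ((c x).level)) := by
  obtain ⟨hAA, hAF, hFA, hnone⟩ := hs
  by_cases hfa : ∃ ℓ, FAcond G c w ℓ
  · obtain ⟨ℓ, hℓ⟩ := hfa
    exact Or.inr ⟨ℓ, hℓ.1, hFA ℓ hℓ, hℓ.2⟩
  · left
    by_cases haf : ∃ ℓ, AFcond k G c w ℓ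
    · obtain ⟨ℓ, hℓ⟩ := haf
      have hq := hAF ℓ hℓ (fun h => hnp h.2.1.1)
      rw [hq, hℓ.1]; rfl
    · have hq : q = c w :=
        hnone (fun ℓ => ⟨fun h => hnp h.2.1.1, fun h => haf ⟨ℓ, h⟩, fun h => hfa ⟨ℓ, h⟩⟩)
      rw [hq]

lemma gap_lemma (k a b : ℤ) (hk : 2 ≤ k) (hb1 : 1 ≤ |b|) (hbk : |b| ≤ k)
    (hna : ¬ adjLvl k a b) (hab : a < b) : a + 2 ≤ b := by
  by_contra h
  have hb : b = a + 1 := by omega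
  have hb0 : b ≠ 0 := by rintro rfl; simp at hb1
  have hbk' := abs_le.mp hbk
  apply hna
  right; left
  unfold forwardOp
  split_ifs with h1 h2
  · omega
  · omega
  · omega

/-- in AlgAU, if an edge `(u, v)` is not protected at time `t` and
`λ_u^t < λ_v^t`, then `λ_u^t ≤ λ_u^{t+1} < λ_v^{t+1} ≤ λ_v^t`. -/
theorem stmt_6 {V : Type} [Fintype V] (G : SimpleGraph V) (D : ℕ) (k : ℤ)
    (hk : k = 3 * D + 2)
    (σ : ℕ → V → Turn) (A : ℕ → Set V)
    (hvalid : ∀ t v, ValidTurn k (σ t v))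
    (hstep : ∀ t, Step k G (A t) (σ t) (σ (t + 1)))
    (t : ℕ) (u v : V) (huv : G.Adj u v)
    (hnprot : ¬ adjLvl k ((σ t u).level) ((σ t v).level))
    (hlt : (σ t u).level < (σ t v).level) :
    (σ t u).level ≤ (σ (t + 1) u).level ∧
    (σ (t + 1) u).level < (σ (t + 1) v).level ∧
    (σ (t + 1) v).level ≤ (σ t v).level := by
  have hk2 : (2 : ℤ) ≤ k := by
    have : (0 : ℤ) ≤ (D : ℤ) := Int.natCast_nonneg D
    omega
  set a := (σ t u).level with ha
  set b := (σ t v).level with hb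
  -- not protected for u and for v
  have hnpu : ¬ NodeProt k G (σ t) u := fun h => hnprot (h v huv.symm)
  have hnpv : ¬ NodeProt k G (σ t) v := by
    intro h
    apply hnprot
    have := h u huv
    unfold adjLvl at this ⊢
    tauto
  -- behaviour of u
  have hu' : (σ (t + 1) u).level = a ∨ ((σ (t + 1) u).level = a + 1 ∧ a ≤ -2) := by
    by_cases hA : u ∈ A t
    · rcases step_node_cases k G (σ t) u (σ (t + 1) u) (((hstep t) u).2 hA) hnpu with
        h | ⟨ℓ, hcw, hq, hns⟩
      · exact Or.inl h
      · have hla : ℓ = a := by rw [ha, hcw]; rfl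
        have hso := hns v (Or.inr huv.symm)
        unfold strictOut at hso
        push_neg at hso
        have hle0 : ℓ ≤ 0 := by
          by_contra hpos
          have := hso.1 (by omega)
          omega
        have hval := hvalid t u
        rw [hcw] at hval
        have hval2 : 2 ≤ |ℓ| := hval.1
        rw [abs_of_nonpos hle0] at hval2
        right
        constructor
        · rw [hq]
          show inwd ℓ = a + 1
          unfold inwd
          rw [if_neg (by omega), hla]
        · omega
    · exact Or.inl (by rw [((hstep t) u).1 hA])
  -- behaviour of v
  have hv' : (σ (t + 1) v).level = b ∨ ((σ (t + 1) v).level = b - 1 ∧ 2 ≤ b) := by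
    by_cases hA : v ∈ A t
    · rcases step_node_cases k G (σ t) v (σ (t + 1) v) (((hstep t) v).2 hA) hnpv with
        h | ⟨ℓ, hcw, hq, hns⟩
      · exact Or.inl h
      · have hlb : ℓ = b := by rw [hb, hcw]; rfl
        have hso := hns u (Or.inr huv)
        unfold strictOut at hso
        push_neg at hso
        have hge0 : 0 ≤ ℓ := by
          by_contra hneg
          have := hso.2 (by omega)
          omega
        have hval := hvalid t v
        rw [hcw] at hval
        have hval2 : 2 ≤ |ℓ| := hval.1
        rw [abs_of_nonneg hge0] at hval2
        right
        constructor
        · rw [hq]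
          show inwd ℓ = b - 1
          unfold inwd
          rw [if_pos (by omega), hlb]
        · omega
    · exact Or.inl (by rw [((hstep t) v).1 hA])
  -- the gap
  have hbv := valid_bounds k (σ t v) (hvalid t v)
  have hgap : a + 2 ≤ b := gap_lemma k a b hk2 hbv.1 hbv.2 hnprot hlt
  rcases hu' with h1 | ⟨h1, h1'⟩ <;> rcases hv' with h2 | ⟨h2, h2'⟩ <;>
    refine ⟨by omega, by omega, by omega⟩
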